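/- (Second bird, α < 1.) Consider an HL-flock with random interactions satisfying Condition (K) with p ∈ (0,1] and 0 < α < 1, with v0 > 0, and suppose L(2) = {1}. Set A0 = 1 + 2x0 and B0 = 2h v0. Then for all t ≥ 0, E‖v_2[t+1]‖ ≤ ‖v_2[0]‖ · exp( −(hp/((1−α)B0)) ( (A0 + B0 t)^{1−α} − A0^{1−α} ) ). -/

import Mathlib

open MeasureTheory Finset Filter

lemma bern_step {A B q : ℝ} (hA : 1 ≤ A) (hB : 0 ≤ B) (hq0 : 0 ≤ q) (hq1 : q ≤ 1) :
    (A + B) ^ q - A ^ q ≤ q * B / A ^ (1 - q) := by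
  have hA0 : 0 < A := lt_of_lt_of_le one_pos hA
  have hs : (0:ℝ) ≤ B / A := div_nonneg hB hA0.le
  have key : (1 + B / A) ^ q ≤ 1 + q * (B / A) :=
    rpow_one_add_le_one_add_mul_self (by linarith) hq0 hq1
  have hAB : A + B = A * (1 + B / A) := by field_simp
  have h2 : (A + B) ^ q = A ^ q * (1 + B / A) ^ q := by
    rw [hAB, Real.mul_rpow hA0.le (by linarith)]
  have hAq : 0 < A ^ q := Real.rpow_pos_of_pos hA0 q
  have h3 : (A + B) ^ q ≤ A ^ q * (1 + q * (B / A)) := by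
    rw [h2]; exact mul_le_mul_of_nonneg_left key hAq.le
  have h4 : A ^ q * (1 + q * (B / A)) = A ^ q + q * B * (A ^ q / A) := by ring
  have h5 : A ^ q / A = A ^ (q - 1) := by
    rw [Real.rpow_sub hA0, Real.rpow_one]
  have h6 : A ^ (q - 1) = (A ^ (1 - q))⁻¹ := by
    rw [← Real.rpow_neg hA0.le, neg_sub]
  calc (A + B) ^ q - A ^ q ≤ A ^ q + q * B * (A ^ q / A) - A ^ q := by linarith
    _ = q * B * (A ^ (1-q))⁻¹ := by rw [h5, h6]; ring
    _ = q * B / A ^ (1-q) := by ring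

/-- Second bird, case `α < 1`: under Condition (K) with `p ∈ (0,1]`, `0 < α < 1`,
`v0 = ‖v[0]‖∞ > 0` and `L(2) = {1}` (zero-based: `L 1 = {0}`), setting
`A0 = 1 + 2 x0` and `B0 = 2 h v0`, for all `t ≥ 0`,
`E‖v_2[t+1]‖ ≤ ‖v_2[0]‖ exp( −(hp/((1−α)B0)) ((A0 + B0 t)^{1−α} − A0^{1−α}) )`. -/
theorem second_bird_bound_alpha_lt_one
    (k : ℕ) (hk : 2 ≤ k)
    (Ω : Type*) [m0 : MeasurableSpace Ω]
    (μ : Measure Ω) [IsProbabilityMeasure μ]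
    (F : ℕ → MeasurableSpace Ω)
    (hFle : ∀ t, F t ≤ m0) (hFmono : Monotone F)
    (x v : ℕ → Ω → Fin k → EuclideanSpace ℝ (Fin 3))
    (L : Fin k → Finset (Fin k))
    (a : ℕ → Ω → Fin k → Fin k → ℝ)
    (h : ℝ) (hh0 : 0 < h) (hh1 : h ≤ 1 / ((k : ℝ) - 1))
    (hLlt : ∀ i : Fin k, ∀ j ∈ L i, j < i)
    (hLne : ∀ i : Fin k, 0 < i.val → (L i).Nonempty)
    (ha0 : ∀ t ω, ∀ i : Fin k, ∀ j ∈ L i, 0 ≤ a t ω i j)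
    (ha1 : ∀ t ω, ∀ i : Fin k, ∀ j ∈ L i, a t ω i j ≤ 1)
    (hxmeas : ∀ t, Measurable[F t] (x t))
    (hvmeas : ∀ t, Measurable[F t] (v t))
    (hameas : ∀ t, ∀ i : Fin k, ∀ j ∈ L i, Measurable[F t] (fun ω => a t ω i j))
    (hxdyn : ∀ t ω i, x (t + 1) ω i = x t ω i + h • v t ω i)
    (hvdyn : ∀ t ω i, v (t + 1) ω i =
      v t ω i + h • ∑ j ∈ L i, a (t + 1) ω i j • (v t ω j - v t ω i))
    (X0 V0 : Fin k → EuclideanSpace ℝ (Fin 3))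
    (hX0 : ∀ ω, x 0 ω = X0) (hV0 : ∀ ω, v 0 ω = V0)
    (hX0z : X0 ⟨0, by omega⟩ = 0) (hV0z : V0 ⟨0, by omega⟩ = 0)
    (p : ℝ) (hp0 : 0 < p) (hp1 : p ≤ 1)
    (α : ℝ) (hα0 : 0 < α) (hα1 : α < 1)
    (hK : ∀ t : ℕ, ∀ i : Fin k, ∀ j ∈ L i,
      ∀ᵐ ω ∂μ, p / (1 + ‖x t ω i - x t ω j‖) ^ α ≤
        (μ[fun ω' => a (t + 1) ω' i j | F t]) ω)
    (hv0pos : 0 < ‖V0‖)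
    (hL2 : L ⟨1, by omega⟩ = {⟨0, by omega⟩}) :
    ∀ t : ℕ, ∫ ω, ‖v (t + 1) ω ⟨1, by omega⟩‖ ∂μ ≤
      ‖V0 ⟨1, by omega⟩‖ *
        Real.exp (-(h * p / ((1 - α) * (2 * h * ‖V0‖))) *
          ((1 + 2 * ‖X0‖ + 2 * h * ‖V0‖ * t) ^ (1 - α) -
            (1 + 2 * ‖X0‖) ^ (1 - α))) := by
  have hk0 : 0 < k := by omega
  set i0 : Fin k := ⟨0, by omega⟩ with hi0def
  set i1 : Fin k := ⟨1, by omega⟩ with hi1def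
  have hh1' : h ≤ 1 := by
    have h1k : (1:ℝ) ≤ (k:ℝ) - 1 := by
      have : (2:ℝ) ≤ (k:ℝ) := by exact_mod_cast hk
      linarith
    calc h ≤ 1 / ((k:ℝ) - 1) := hh1
      _ ≤ 1 := by rw [div_le_one (by linarith)]; exact h1k
  have hmem : i0 ∈ L i1 := by rw [hL2]; exact Finset.mem_singleton_self _
  have hL0 : L i0 = ∅ := by
    apply Finset.eq_empty_of_forall_notMem
    intro j hj
    have := hLlt i0 j hj
    exact absurd this (by simp [hi0def, Fin.lt_def])
  -- bird 1 (index 0) stays at rest at the origin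
  have hv0 : ∀ t ω, v t ω i0 = 0 := by
    intro t
    induction t with
    | zero => intro ω; rw [hV0]; exact hV0z
    | succ n ih => intro ω; rw [hvdyn, hL0, ih]; simp
  have hx0 : ∀ t ω, x t ω i0 = 0 := by
    intro t
    induction t with
    | zero => intro ω; rw [hX0]; exact hX0z
    | succ n ih => intro ω; rw [hxdyn, ih, hv0]; simp
  -- the scalar multiplier process (opaque)
  obtain ⟨c, hcdef⟩ : ∃ c : ℕ → Ω → ℝ, ∀ t ω,
      c t ω = ∏ s ∈ Finset.range t, (1 - h * a (s+1) ω i1 i0) := ⟨_, fun _ _ => rfl⟩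
  have hc0 : ∀ ω, c 0 ω = 1 := by intro ω; rw [hcdef]; simp
  have hcsucc : ∀ t ω, c (t+1) ω = c t ω * (1 - h * a (t+1) ω i1 i0) := by
    intro t ω; rw [hcdef, hcdef, Finset.prod_range_succ]
  have hfac0 : ∀ s ω, 0 ≤ 1 - h * a (s+1) ω i1 i0 := by
    intro s ω
    have h1 : h * a (s+1) ω i1 i0 ≤ 1 * 1 :=
      mul_le_mul hh1' (ha1 _ ω i1 i0 hmem) (ha0 _ ω i1 i0 hmem) zero_le_one
    linarith
  have hfac1 : ∀ s ω, 1 - h * a (s+1) ω i1 i0 ≤ 1 := by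
    intro s ω
    have := mul_nonneg hh0.le (ha0 (s+1) ω i1 i0 hmem)
    linarith
  have hcnn : ∀ t ω, 0 ≤ c t ω := by
    intro t ω; rw [hcdef]
    exact Finset.prod_nonneg (fun s _ => hfac0 s ω)
  have hcle1 : ∀ t ω, c t ω ≤ 1 := by
    intro t ω; rw [hcdef]
    exact Finset.prod_le_one (fun s _ => hfac0 s ω) (fun s _ => hfac1 s ω)
  have hcFmeas : ∀ t, Measurable[F t] (c t) := by
    intro t
    have hce : c t = fun ω => ∏ s ∈ Finset.range t, (1 - h * a (s+1) ω i1 i0) :=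
      funext (hcdef t)
    rw [hce]
    apply Finset.measurable_prod
    intro s hs
    have hst : s + 1 ≤ t := Nat.succ_le_of_lt (Finset.mem_range.mp hs)
    have : Measurable[F t] (fun ω => a (s+1) ω i1 i0) :=
      (hameas (s+1) i1 i0 hmem).mono (hFmono hst) le_rfl
    exact (measurable_const.sub (this.const_mul h))
  -- representation of the velocity of bird 2
  have hvrep : ∀ t ω, v t ω i1 = c t ω • V0 i1 := by
    intro t
    induction t with
    | zero => intro ω; rw [hV0, hc0, one_smul]
    | succ n ih =>
      intro ω
      rw [hvdyn, hL2, Finset.sum_singleton, hv0 n ω, ih ω, hcsucc]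
      rw [zero_sub, smul_neg, smul_neg, smul_smul, smul_smul]
      rw [← sub_eq_add_neg, ← sub_smul]
      congr 1
      ring
  have hnormv : ∀ t ω, ‖v t ω i1‖ = c t ω * ‖V0 i1‖ := by
    intro t ω
    rw [hvrep t ω, norm_smul, Real.norm_eq_abs, abs_of_nonneg (hcnn t ω)]
  -- position bound
  have hV0i1 : ‖V0 i1‖ ≤ ‖V0‖ := norm_le_pi_norm V0 i1
  have hX0i1 : ‖X0 i1‖ ≤ ‖X0‖ := norm_le_pi_norm X0 i1
  have hxle : ∀ t ω, ‖x t ω i1‖ ≤ ‖X0‖ + h * t * ‖V0‖ := by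
    intro t
    induction t with
    | zero => intro ω; rw [hX0]; simpa using hX0i1
    | succ n ih =>
      intro ω
      rw [hxdyn]
      have h1 : ‖x n ω i1 + h • v n ω i1‖ ≤ ‖x n ω i1‖ + h * ‖v n ω i1‖ := by
        calc ‖x n ω i1 + h • v n ω i1‖ ≤ ‖x n ω i1‖ + ‖h • v n ω i1‖ := norm_add_le _ _
          _ = ‖x n ω i1‖ + |h| * ‖v n ω i1‖ := by rw [norm_smul, Real.norm_eq_abs]
          _ = ‖x n ω i1‖ + h * ‖v n ω i1‖ := by rw [abs_of_nonneg hh0.le]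
      have h2 : ‖v n ω i1‖ ≤ ‖V0‖ := by
        rw [hnormv]
        calc c n ω * ‖V0 i1‖ ≤ 1 * ‖V0‖ :=
          mul_le_mul (hcle1 n ω) hV0i1 (norm_nonneg _) zero_le_one
          _ = ‖V0‖ := one_mul _
      have h4 := ih ω
      have hcast : ((n+1 : ℕ) : ℝ) = (n:ℝ) + 1 := by push_cast; ring
      rw [hcast]
      have h3 : h * ‖v n ω i1‖ ≤ h * ‖V0‖ := mul_le_mul_of_nonneg_left h2 hh0.le
      nlinarith [norm_nonneg (v n ω i1)]
  -- the deterministic bound sequence (opaque)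
  obtain ⟨D, hDdef⟩ : ∃ D : ℕ → ℝ, ∀ s : ℕ,
      D s = 1 + 2 * ‖X0‖ + 2 * h * ‖V0‖ * s := ⟨_, fun _ => rfl⟩
  have hD1 : ∀ s, 1 ≤ D s := by
    intro s
    have h1 : (0:ℝ) ≤ 2 * h * ‖V0‖ * s :=
      mul_nonneg (mul_nonneg (by linarith) hv0pos.le) (Nat.cast_nonneg s)
    have h2 : (0:ℝ) ≤ ‖X0‖ := norm_nonneg X0
    rw [hDdef]; linarith
  have hDα1 : ∀ s, 1 ≤ (D s) ^ α := fun s =>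
    Real.one_le_rpow (hD1 s) hα0.le
  have hDαpos : ∀ s, 0 < (D s) ^ α := fun s => lt_of_lt_of_le one_pos (hDα1 s)
  obtain ⟨r, hrdef⟩ : ∃ r : ℕ → ℝ, ∀ s : ℕ,
      r s = h * p / (D s) ^ α := ⟨_, fun _ => rfl⟩
  have hr0 : ∀ s, 0 ≤ r s := by
    intro s; rw [hrdef]
    exact div_nonneg (mul_nonneg hh0.le hp0.le) (hDαpos s).le
  have hr1 : ∀ s, r s ≤ 1 := by
    intro s
    rw [hrdef, div_le_one (hDαpos s)]
    calc h * p ≤ 1 * 1 := mul_le_mul hh1' hp1 hp0.le zero_le_one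
      _ = 1 := one_mul 1
      _ ≤ (D s) ^ α := hDα1 s
  -- measurability and integrability
  have hamble : ∀ t, Measurable[m0] (fun ω => a (t+1) ω i1 i0) := fun t =>
    (hameas (t+1) i1 i0 hmem).mono (hFle (t+1)) le_rfl
  have hcmeas : ∀ t, Measurable[m0] (c t) := fun t =>
    (hcFmeas t).mono (hFle t) le_rfl
  have hint_c : ∀ t, Integrable (c t) μ := by
    intro t
    refine (integrable_const (1:ℝ)).mono' (hcmeas t).aestronglyMeasurable ?_
    filter_upwards with ω
    rw [Real.norm_eq_abs, abs_of_nonneg (hcnn t ω)]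
    exact hcle1 t ω
  have hint_ca : ∀ t, Integrable (fun ω => c t ω * a (t+1) ω i1 i0) μ := by
    intro t
    refine (integrable_const (1:ℝ)).mono'
      ((hcmeas t).mul (hamble t)).aestronglyMeasurable ?_
    filter_upwards with ω
    rw [Real.norm_eq_abs, abs_of_nonneg (mul_nonneg (hcnn t ω) (ha0 _ ω i1 i0 hmem))]
    calc c t ω * a (t+1) ω i1 i0 ≤ 1 * 1 :=
      mul_le_mul (hcle1 t ω) (ha1 _ ω i1 i0 hmem) (ha0 _ ω i1 i0 hmem) zero_le_one
      _ = 1 := one_mul 1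
  -- the key one-step estimate
  have hstep : ∀ t, ∫ ω, c (t+1) ω ∂μ ≤ (1 - r t) * ∫ ω, c t ω ∂μ := by
    intro t
    haveI : SigmaFinite (μ.trim (hFle t)) := by
      have : IsFiniteMeasure (μ.trim (hFle t)) := isFiniteMeasure_trim _
      infer_instance
    -- lower bound for ∫ c·a
    have keylow : (p / (D t) ^ α) * ∫ ω, c t ω ∂μ ≤
        ∫ ω, c t ω * a (t+1) ω i1 i0 ∂μ := by
      have e2 : (μ[fun ω' => c t ω' * a (t+1) ω' i1 i0 | F t]) =ᵐ[μ]
          fun ω => c t ω * (μ[fun ω' => a (t+1) ω' i1 i0 | F t]) ω := by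
        have := condExp_mul_of_stronglyMeasurable_left (μ := μ) (m := F t)
          (hcFmeas t).stronglyMeasurable (hint_ca t)
          ((integrable_const (1:ℝ)).mono' (hamble t).aestronglyMeasurable
            (by filter_upwards with ω;
                rw [Real.norm_eq_abs, abs_of_nonneg (ha0 _ ω i1 i0 hmem)];
                exact ha1 _ ω i1 i0 hmem))
        exact this
      have e3 : ∀ᵐ ω ∂μ, (p / (D t) ^ α) * c t ω ≤
          c t ω * (μ[fun ω' => a (t+1) ω' i1 i0 | F t]) ω := by
        filter_upwards [hK t i1 i0 hmem] with ω hω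
        have hx1 : ‖x t ω i1 - x t ω i0‖ ≤ D t - 1 := by
          rw [hx0 t ω, sub_zero]
          have h5 := hxle t ω
          have hnn : (0:ℝ) ≤ h * t * ‖V0‖ :=
            mul_nonneg (mul_nonneg hh0.le (Nat.cast_nonneg t)) hv0pos.le
          have hX0nn := norm_nonneg X0
          rw [hDdef]
          nlinarith
        have hbase : (1:ℝ) ≤ 1 + ‖x t ω i1 - x t ω i0‖ := by
          have := norm_nonneg (x t ω i1 - x t ω i0); linarith
        have hrpow : (1 + ‖x t ω i1 - x t ω i0‖) ^ α ≤ (D t) ^ α :=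
          Real.rpow_le_rpow (by linarith) (by linarith) hα0.le
        have hdiv : p / (D t) ^ α ≤ p / (1 + ‖x t ω i1 - x t ω i0‖) ^ α :=
          div_le_div_of_nonneg_left hp0.le
            (lt_of_lt_of_le one_pos (Real.one_le_rpow hbase hα0.le)) hrpow
        have hfin : p / (D t) ^ α ≤ (μ[fun ω' => a (t + 1) ω' i1 i0 | F t]) ω :=
          le_trans hdiv hω
        calc (p / (D t) ^ α) * c t ω = c t ω * (p / (D t) ^ α) := by ring
          _ ≤ c t ω * (μ[fun ω' => a (t + 1) ω' i1 i0 | F t]) ω :=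
            mul_le_mul_of_nonneg_left hfin (hcnn t ω)
      calc (p / (D t) ^ α) * ∫ ω, c t ω ∂μ
          = ∫ ω, (p / (D t) ^ α) * c t ω ∂μ := (integral_const_mul _ _).symm
        _ ≤ ∫ ω, c t ω * (μ[fun ω' => a (t+1) ω' i1 i0 | F t]) ω ∂μ := by
            apply integral_mono_ae ((hint_c t).const_mul _)
              ((integrable_condExp).congr e2) e3
        _ = ∫ ω, (μ[fun ω' => c t ω' * a (t+1) ω' i1 i0 | F t]) ω ∂μ :=
            (integral_congr_ae e2).symm
        _ = ∫ ω, c t ω * a (t+1) ω i1 i0 ∂μ := integral_condExp (hFle t)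
    have expand : ∫ ω, c (t+1) ω ∂μ =
        (∫ ω, c t ω ∂μ) - h * ∫ ω, c t ω * a (t+1) ω i1 i0 ∂μ := by
      have hpt : ∀ ω, c (t+1) ω = c t ω - h * (c t ω * a (t+1) ω i1 i0) := by
        intro ω; rw [hcsucc]; ring
      rw [integral_congr_ae (Filter.Eventually.of_forall hpt),
        integral_sub (hint_c t) ((hint_ca t).const_mul h), integral_const_mul]
    rw [expand]
    have hmul : h * ((p / (D t) ^ α) * ∫ ω, c t ω ∂μ) ≤
        h * ∫ ω, c t ω * a (t+1) ω i1 i0 ∂μ :=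
      mul_le_mul_of_nonneg_left keylow hh0.le
    have he : (1 - r t) * ∫ ω, c t ω ∂μ =
        (∫ ω, c t ω ∂μ) - h * ((p / (D t) ^ α) * ∫ ω, c t ω ∂μ) := by
      rw [hrdef]; ring
    linarith [hmul, he]
  -- iterate: integral of c (t+1) bounded by product
  have hc0int : ∫ ω, c 0 ω ∂μ = 1 := by
    rw [integral_congr_ae (Filter.Eventually.of_forall hc0)]
    simp
  have hprod : ∀ t, ∫ ω, c (t+1) ω ∂μ ≤ ∏ s ∈ Finset.range (t+1), (1 - r s) := by
    intro t
    induction t with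
    | zero =>
      have h1 := hstep 0
      rw [hc0int, mul_one] at h1
      rw [Finset.prod_range_one]
      exact h1
    | succ n ih =>
      have h1 := hstep (n+1)
      have h2 : (1 - r (n+1)) * ∫ ω, c (n+1) ω ∂μ ≤
          (1 - r (n+1)) * ∏ s ∈ Finset.range (n+1), (1 - r s) :=
        mul_le_mul_of_nonneg_left ih (by have := hr1 (n+1); linarith)
      calc ∫ ω, c (n+1+1) ω ∂μ ≤ (1 - r (n+1)) * ∫ ω, c (n+1) ω ∂μ := h1
        _ ≤ (1 - r (n+1)) * ∏ s ∈ Finset.range (n+1), (1 - r s) := h2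
        _ = ∏ s ∈ Finset.range (n+1+1), (1 - r s) := by
            rw [Finset.prod_range_succ (fun s => 1 - r s) (n+1)]; exact mul_comm _ _
  -- analytic estimate on the product
  have hB0pos : (0:ℝ) < 2 * h * ‖V0‖ := by positivity
  obtain ⟨C, hCdef⟩ : ∃ C : ℝ, C = h * p / ((1 - α) * (2 * h * ‖V0‖)) := ⟨_, rfl⟩
  have hCpos : 0 < C := by
    rw [hCdef]
    exact div_pos (mul_pos hh0 hp0) (mul_pos (by linarith) hB0pos)
  have hDsucc : ∀ s : ℕ, D (s+1) = D s + 2 * h * ‖V0‖ := by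
    intro s
    rw [hDdef, hDdef]
    push_cast
    ring
  have hterm : ∀ s : ℕ, C * ((D (s+1)) ^ (1-α) - (D s) ^ (1-α)) ≤ r s := by
    intro s
    have hb : (D (s+1)) ^ (1-α) - (D s) ^ (1-α) ≤
        (1-α) * (2 * h * ‖V0‖) / (D s) ^ (1 - (1-α)) := by
      rw [hDsucc s]
      exact bern_step (hD1 s) hB0pos.le (by linarith) (by linarith)
    have h1q : 1 - (1 - α) = α := by ring
    rw [h1q] at hb
    have hm : C * ((D (s+1)) ^ (1-α) - (D s) ^ (1-α)) ≤
        C * ((1-α) * (2 * h * ‖V0‖) / (D s) ^ α) :=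
      mul_le_mul_of_nonneg_left hb hCpos.le
    have heq : C * ((1-α) * (2 * h * ‖V0‖) / (D s) ^ α) = r s := by
      rw [hCdef, hrdef]
      have hne1 : ((1 - α) * (2 * h * ‖V0‖)) ≠ 0 :=
        (mul_pos (by linarith) hB0pos).ne'
      have hne2 : (D s) ^ α ≠ 0 := (hDαpos s).ne'
      have hne3 : (1 - α) ≠ 0 := (by linarith : (0:ℝ) < 1 - α).ne'
      field_simp
    linarith [hm, heq.le]
  have hanalytic : ∀ t : ℕ, ∏ s ∈ Finset.range (t+1), (1 - r s) ≤
      Real.exp (-C * ((D t) ^ (1-α) - (D 0) ^ (1-α))) := by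
    intro t
    have step1 : ∏ s ∈ Finset.range (t+1), (1 - r s) ≤
        ∏ s ∈ Finset.range (t+1), Real.exp (-(r s)) := by
      apply Finset.prod_le_prod
      · intro s _; have := hr1 s; linarith
      · intro s _
        have := Real.add_one_le_exp (-(r s))
        linarith
    have step2 : ∏ s ∈ Finset.range (t+1), Real.exp (-(r s)) =
        Real.exp (∑ s ∈ Finset.range (t+1), -(r s)) := (Real.exp_sum _ _).symm
    have step3 : ∑ s ∈ Finset.range (t+1), -(r s) ≤
        -C * ((D t) ^ (1-α) - (D 0) ^ (1-α)) := by
      rw [Finset.sum_neg_distrib, neg_mul, neg_le_neg_iff]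
      have htele : C * ((D t) ^ (1-α) - (D 0) ^ (1-α)) =
          ∑ s ∈ Finset.range t, C * ((D (s+1)) ^ (1-α) - (D s) ^ (1-α)) := by
        rw [← Finset.mul_sum, Finset.sum_range_sub (fun s => (D s) ^ (1-α))]
      rw [htele]
      calc ∑ s ∈ Finset.range t, C * ((D (s+1)) ^ (1-α) - (D s) ^ (1-α))
          ≤ ∑ s ∈ Finset.range t, r s := Finset.sum_le_sum (fun s _ => hterm s)
        _ ≤ ∑ s ∈ Finset.range (t+1), r s := by
            rw [Finset.sum_range_succ]
            have := hr0 t; linarith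
    calc ∏ s ∈ Finset.range (t+1), (1 - r s)
        ≤ Real.exp (∑ s ∈ Finset.range (t+1), -(r s)) := step2 ▸ step1
      _ ≤ Real.exp (-C * ((D t) ^ (1-α) - (D 0) ^ (1-α))) := Real.exp_le_exp.mpr step3
  -- conclusion
  intro t
  have hD0 : D 0 = 1 + 2 * ‖X0‖ := by rw [hDdef]; push_cast; ring
  have heqint : ∫ ω, ‖v (t+1) ω i1‖ ∂μ = (∫ ω, c (t+1) ω ∂μ) * ‖V0 i1‖ := by
    rw [← integral_mul_const]
    exact integral_congr_ae (Filter.Eventually.of_forall (fun ω => hnormv (t+1) ω))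
  have hbound : ∫ ω, c (t+1) ω ∂μ ≤ Real.exp (-C * ((D t) ^ (1-α) - (D 0) ^ (1-α))) :=
    le_trans (hprod t) (hanalytic t)
  calc ∫ ω, ‖v (t+1) ω i1‖ ∂μ = (∫ ω, c (t+1) ω ∂μ) * ‖V0 i1‖ := heqint
    _ ≤ Real.exp (-C * ((D t) ^ (1-α) - (D 0) ^ (1-α))) * ‖V0 i1‖ :=
        mul_le_mul_of_nonneg_right hbound (norm_nonneg _)
    _ = ‖V0 i1‖ * Real.exp (-C * ((D t) ^ (1-α) - (D 0) ^ (1-α))) := mul_comm _ _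
    _ = ‖V0 i1‖ * Real.exp (-(h * p / ((1 - α) * (2 * h * ‖V0‖))) *
          ((1 + 2 * ‖X0‖ + 2 * h * ‖V0‖ * t) ^ (1 - α) -
            (1 + 2 * ‖X0‖) ^ (1 - α))) := by
        rw [hD0, hDdef, hCdef]
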